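/- arXiv:1611.00682 — 2 statements merged into one kernel-verified Lean document; each statement's English description precedes it below -/
import Mathlib

section
/- Suppose f belongs to the closed convex hull of the starlike functions; equivalently, f(z) = (z/2)·(1 + g(z) + z·g'(z)) on 𝔻 for some g ∈ P, so that its Taylor coefficients satisfy a_n = n·p_{n−1}/2 for n ≥ 2. Then for all m, n ≥ 2: |a_m·a_n/(mn) − a_{m+n−1}/(m+n−1)| + |a_m·a_n|/(mn) ≤ 1. -/
/-!
For `0 ≤ r < 1` the weight `Re g(r e^{iθ}) / 2π` is a probability density on `(0, 2π]`, and
integrating the power series of `g` termwise shows that its Fourier coefficients `∫ e^{-inθ}` are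
`c_n = p_n r^n / 2` for `n ≥ 1`. For random variables `u, v` bounded by `1` on a probability space,
Cauchy–Schwarz applied to the centred variables gives
`|E[uv] - E[u] E[v]| ≤ √(1 - |E u|²) √(1 - |E v|²) ≤ 1 - |E u| |E v|`.
With `u = e^{-ikθ}` and `v = e^{-ilθ}` this reads `|c_{k+l} - c_k c_l| + |c_k c_l| ≤ 1`; let `r → 1`
and substitute `a_n = n p_{n-1} / 2`.
-/

open MeasureTheory Metric Complex Real Filter Topology Set
open scoped NNReal ENNReal ComplexConjugate

theorem Real.sqrt_one_sub_sq_mul_sqrt_one_sub_sq_le {x y : ℝ} (hx : x ^ 2 ≤ 1) (hy : y ^ 2 ≤ 1) :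
    √(1 - x ^ 2) * √(1 - y ^ 2) ≤ 1 - x * y := by
  have hxy : 0 ≤ 1 - x * y := by nlinarith [sq_nonneg (x - y)]
  rw [← Real.sqrt_mul (by linarith), ← Real.sqrt_sq hxy]
  exact Real.sqrt_le_sqrt (by nlinarith [sq_nonneg (x - y)])

section Probability

variable {α : Type*} [MeasurableSpace α] {μ : Measure α}

theorem norm_integral_mul_le_sqrt_mul_sqrt {𝕜 : Type*} [RCLike 𝕜] {f g : α → 𝕜}
    (hf : MemLp f 2 μ) (hg : MemLp g 2 μ) :
    ‖∫ x, f x * g x ∂μ‖ ≤ √(∫ x, ‖f x‖ ^ 2 ∂μ) * √(∫ x, ‖g x‖ ^ 2 ∂μ) := by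
  have holder := integral_mul_norm_le_Lp_mul_Lq Real.HolderConjugate.two_two
    (by simpa using hf) (by simpa using hg)
  simp only [Real.rpow_two, ← Real.sqrt_eq_rpow] at holder
  calc ‖∫ x, f x * g x ∂μ‖ ≤ ∫ x, ‖f x‖ * ‖g x‖ ∂μ := by
        simpa only [norm_mul] using norm_integral_le_integral_norm (fun x => f x * g x)
    _ ≤ _ := holder

variable [IsProbabilityMeasure μ]

theorem integral_norm_sub_integral_sq {E : Type*} [NormedAddCommGroup E] [InnerProductSpace ℝ E]
    [CompleteSpace E] {u : α → E} (hu : MemLp u 2 μ) :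
    ∫ x, ‖u x - ∫ y, u y ∂μ‖ ^ 2 ∂μ = ∫ x, ‖u x‖ ^ 2 ∂μ - ‖∫ x, u x ∂μ‖ ^ 2 := by
  set a := ∫ x, u x ∂μ
  have hu1 : Integrable u μ := hu.integrable one_le_two
  have hinner : ∫ x, inner ℝ (u x) a ∂μ = ‖a‖ ^ 2 := by
    simp_rw [real_inner_comm a]
    rw [integral_inner hu1, real_inner_self_eq_norm_sq]
  have hsq := hu.norm.integrable_sq
  have hlin : Integrable (fun x => 2 * inner ℝ (u x) a) μ := (hu1.inner_const a).const_mul 2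
  have hdiff : Integrable (fun x => ‖u x‖ ^ 2 - 2 * inner ℝ (u x) a) μ := hsq.sub hlin
  simp_rw [norm_sub_sq_real]
  rw [integral_add hdiff (integrable_const _), integral_sub hsq hlin,
    integral_const_mul, hinner]
  simp only [integral_const, probReal_univ, smul_eq_mul, one_mul]
  ring

theorem norm_integral_mul_sub_mul_integral_le {𝕜 : Type*} [RCLike 𝕜] {u v : α → 𝕜}
    (hu : MemLp u 2 μ) (hv : MemLp v 2 μ) :
    ‖∫ x, u x * v x ∂μ - (∫ x, u x ∂μ) * ∫ x, v x ∂μ‖ ≤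
      √(∫ x, ‖u x‖ ^ 2 ∂μ - ‖∫ x, u x ∂μ‖ ^ 2) * √(∫ x, ‖v x‖ ^ 2 ∂μ - ‖∫ x, v x ∂μ‖ ^ 2) := by
  set a := ∫ x, u x ∂μ
  set b := ∫ x, v x ∂μ
  have huv : Integrable (fun x => u x * v x) μ := hu.integrable_mul hv
  have hu1 : Integrable u μ := hu.integrable one_le_two
  have hv1 : Integrable v μ := hv.integrable one_le_two
  have hcentered : ∫ x, (u x - a) * (v x - b) ∂μ = ∫ x, u x * v x ∂μ - a * b := by
    have hexpand : ∀ x, (u x - a) * (v x - b) = u x * v x - (b * u x + a * v x) + a * b :=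
      fun x => by ring
    have hlin : Integrable (fun x => b * u x + a * v x) μ := (hu1.const_mul b).add (hv1.const_mul a)
    have hdiff : Integrable (fun x => u x * v x - (b * u x + a * v x)) μ := huv.sub hlin
    simp_rw [hexpand]
    rw [integral_add hdiff (integrable_const _), integral_sub huv hlin,
      integral_add (hu1.const_mul b) (hv1.const_mul a), integral_const_mul, integral_const_mul]
    simp only [integral_const, probReal_univ, one_smul]
    ring
  rw [← hcentered, ← integral_norm_sub_integral_sq hu, ← integral_norm_sub_integral_sq hv]
  exact norm_integral_mul_le_sqrt_mul_sqrt (hu.sub (memLp_const a)) (hv.sub (memLp_const b))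

theorem norm_integral_mul_sub_add_le_one {𝕜 : Type*} [RCLike 𝕜] {u v : α → 𝕜}
    (hu : AEStronglyMeasurable u μ) (hv : AEStronglyMeasurable v μ)
    (hu1 : ∀ᵐ x ∂μ, ‖u x‖ ≤ 1) (hv1 : ∀ᵐ x ∂μ, ‖v x‖ ≤ 1) :
    ‖∫ x, u x * v x ∂μ - (∫ x, u x ∂μ) * ∫ x, v x ∂μ‖ + ‖(∫ x, u x ∂μ) * ∫ x, v x ∂μ‖ ≤ 1 := by
  have second_moment_le {w : α → 𝕜} (hw : MemLp w 2 μ) (hw1 : ∀ᵐ x ∂μ, ‖w x‖ ≤ 1) :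
      ∫ x, ‖w x‖ ^ 2 ∂μ ≤ 1 := by
    calc ∫ x, ‖w x‖ ^ 2 ∂μ ≤ ∫ _, (1 : ℝ) ∂μ :=
          integral_mono_ae hw.norm.integrable_sq (integrable_const 1)
            (hw1.mono fun x hx => pow_le_one₀ (norm_nonneg _) hx)
      _ = 1 := by simp
  have mean_sq_le {w : α → 𝕜} (hw1 : ∀ᵐ x ∂μ, ‖w x‖ ≤ 1) : ‖∫ x, w x ∂μ‖ ^ 2 ≤ 1 := by
    have := norm_integral_le_of_norm_le_const hw1
    rw [probReal_univ, mul_one] at this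
    exact pow_le_one₀ (norm_nonneg _) this
  have hu2 : MemLp u 2 μ := .of_bound hu 1 hu1
  have hv2 : MemLp v 2 μ := .of_bound hv 1 hv1
  calc _ ≤ √(1 - ‖∫ x, u x ∂μ‖ ^ 2) * √(1 - ‖∫ x, v x ∂μ‖ ^ 2)
          + ‖∫ x, u x ∂μ‖ * ‖∫ x, v x ∂μ‖ := by
        rw [norm_mul]
        gcongr
        refine (norm_integral_mul_sub_mul_integral_le hu2 hv2).trans ?_
        gcongr
        · exact second_moment_le hu2 hu1
        · exact second_moment_le hv2 hv1
    _ ≤ 1 := by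
        linarith [Real.sqrt_one_sub_sq_mul_sqrt_one_sub_sq_le (mean_sq_le hu1) (mean_sq_le hv1)]

end Probability

theorem hasFPowerSeriesOnBall_ofScalars {g : ℂ → ℂ} {p : ℕ → ℂ} {R : ℝ≥0} (hR : 0 < R)
    (hsum : ∀ z ∈ ball (0 : ℂ) R, HasSum (fun n => p n * z ^ n) (g z)) :
    HasFPowerSeriesOnBall g (FormalMultilinearSeries.ofScalars ℂ p) 0 R where
  r_le := by
    refine ENNReal.le_of_forall_nnreal_lt fun q hq => ?_
    have hq' : (q : ℂ) ∈ ball (0 : ℂ) R := by simpa using hq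
    refine FormalMultilinearSeries.le_radius_of_tendsto _ (l := 0) ?_
    simpa [FormalMultilinearSeries.ofScalars_norm] using
      (hsum _ hq').summable.tendsto_atTop_zero.norm
  r_pos := by simpa using hR
  hasSum {y} hy := by
    rw [Metric.eball_coe] at hy
    simpa [FormalMultilinearSeries.ofScalars_apply_eq, mul_comm] using hsum y hy

theorem integral_exp_mul_I_zpow (j : ℤ) :
    ∫ θ in (0)..(2 * π), exp (θ * I) ^ j = if j = 0 then (2 * π : ℂ) else 0 := by
  split_ifs with hj
  · simp [hj]
  · have h := circleIntegral.integral_sub_zpow_of_ne (n := j - 1) (by omega) 0 0 1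
    simp only [circleIntegral, deriv_circleMap, circleMap_zero, ofReal_one, one_mul, sub_zero,
      smul_eq_mul] at h
    have hpow : ∀ θ : ℝ, exp (θ * I) * I * exp (θ * I) ^ (j - 1) = I * exp (θ * I) ^ j :=
      fun θ => by
        rw [mul_comm _ I, mul_assoc, ← zpow_one_add₀ (Complex.exp_ne_zero _), add_sub_cancel]
    simpa [hpow, intervalIntegral.integral_const_mul, I_ne_zero] using h

@[fun_prop]
theorem continuous_exp_mul_I_zpow (j : ℤ) : Continuous fun θ : ℝ => exp (θ * I) ^ j :=
  (by fun_prop : Continuous fun θ : ℝ => exp (θ * I)).zpow₀ j fun _ => .inl (Complex.exp_ne_zero _)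

section Circle

variable {g : ℂ → ℂ} {p : ℕ → ℂ} {r : ℝ}

theorem continuous_comp_circleMap (hsum : ∀ z ∈ ball (0 : ℂ) 1, HasSum (fun n => p n * z ^ n) (g z))
    (hr0 : 0 ≤ r) (hr1 : r < 1) : Continuous fun θ => g (circleMap 0 r θ) :=
  (hasFPowerSeriesOnBall_ofScalars one_pos (by simpa using hsum)).continuousOn.comp_continuous
    (continuous_circleMap 0 r) fun θ => by
      rw [Metric.eball_coe]; simpa [abs_of_nonneg hr0] using hr1

theorem hasSum_integral_zpow_mul_comp_circleMap
    (hsum : ∀ z ∈ ball (0 : ℂ) 1, HasSum (fun n => p n * z ^ n) (g z))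
    (hr0 : 0 ≤ r) (hr1 : r < 1) (j : ℤ) :
    HasSum (fun n : ℕ => p n * r ^ n * ∫ θ in (0)..(2 * π), exp (θ * I) ^ ((n : ℤ) + j))
      (∫ θ in (0)..(2 * π), exp (θ * I) ^ j * g (circleMap 0 r θ)) := by
  have hterm (n : ℕ) (θ : ℝ) :
      exp (θ * I) ^ j * (p n * circleMap 0 r θ ^ n) =
        p n * r ^ n * exp (θ * I) ^ ((n : ℤ) + j) := by
    rw [circleMap_zero, zpow_add₀ (Complex.exp_ne_zero _), zpow_natCast]
    ring
  have hsummable : Summable fun n => ‖p n‖ * r ^ n := by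
    have hr : (r.toNNReal : ℝ≥0∞) < (FormalMultilinearSeries.ofScalars ℂ p).radius :=
      lt_of_lt_of_le (by simpa using hr1)
        (hasFPowerSeriesOnBall_ofScalars one_pos (by simpa using hsum)).r_le
    simpa [FormalMultilinearSeries.ofScalars_norm, hr0] using
      FormalMultilinearSeries.summable_norm_mul_pow _ hr
  have key := intervalIntegral.hasSum_integral_of_dominated_convergence
    (a := 0) (b := 2 * π) (μ := volume)
    (F := fun n θ => exp (θ * I) ^ j * (p n * circleMap 0 r θ ^ n))
    (fun n _ => ‖p n‖ * r ^ n)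
    (fun n => by fun_prop)
    (fun n => ae_of_all _ fun θ _ => by simp [norm_zpow, abs_of_nonneg hr0])
    (ae_of_all _ fun _ _ => hsummable) intervalIntegrable_const
    (ae_of_all _ fun θ _ => (hsum _ (by simp [abs_of_nonneg hr0, hr1])).mul_left _)
  simpa only [hterm, intervalIntegral.integral_const_mul] using key

theorem integral_zpow_neg_mul_comp_circleMap
    (hsum : ∀ z ∈ ball (0 : ℂ) 1, HasSum (fun n => p n * z ^ n) (g z))
    (hr0 : 0 ≤ r) (hr1 : r < 1) (n : ℕ) :
    ∫ θ in (0)..(2 * π), exp (θ * I) ^ (-(n : ℤ)) * g (circleMap 0 r θ) =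
      2 * π * (p n * r ^ n) := by
  refine (hasSum_integral_zpow_mul_comp_circleMap hsum hr0 hr1 _).unique ?_
  convert hasSum_single n fun m hm => ?_ using 1
  · rw [add_neg_cancel, integral_exp_mul_I_zpow, if_pos rfl]
    ring
  · rw [integral_exp_mul_I_zpow, if_neg (by omega), mul_zero]

theorem integral_zpow_mul_comp_circleMap_of_pos
    (hsum : ∀ z ∈ ball (0 : ℂ) 1, HasSum (fun n => p n * z ^ n) (g z))
    (hr0 : 0 ≤ r) (hr1 : r < 1) {n : ℕ} (hn : 0 < n) :
    ∫ θ in (0)..(2 * π), exp (θ * I) ^ (n : ℤ) * g (circleMap 0 r θ) = 0 := by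
  refine (hasSum_integral_zpow_mul_comp_circleMap hsum hr0 hr1 _).unique ?_
  convert hasSum_zero with m
  rw [integral_exp_mul_I_zpow, if_neg (by omega), mul_zero]

theorem integral_re_comp_circleMap (hp0 : p 0 = 1)
    (hsum : ∀ z ∈ ball (0 : ℂ) 1, HasSum (fun n => p n * z ^ n) (g z))
    (hr0 : 0 ≤ r) (hr1 : r < 1) :
    ∫ θ in (0)..(2 * π), (g (circleMap 0 r θ)).re = 2 * π := by
  have h := integral_zpow_neg_mul_comp_circleMap hsum hr0 hr1 0
  simp only [CharP.cast_eq_zero, neg_zero, zpow_zero, one_mul, hp0, pow_zero, mul_one] at h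
  rw [intervalIntegral.integral_of_le two_pi_pos.le] at h ⊢
  have hint := (continuous_comp_circleMap hsum hr0 hr1).intervalIntegrable (μ := volume) 0 (2 * π)
  have hre := integral_re hint.1
  simp only [RCLike.re_to_complex] at hre
  rw [hre, h]
  simp

theorem integral_zpow_neg_mul_re_comp_circleMap
    (hsum : ∀ z ∈ ball (0 : ℂ) 1, HasSum (fun n => p n * z ^ n) (g z))
    (hr0 : 0 ≤ r) (hr1 : r < 1) {n : ℕ} (hn : 0 < n) :
    ∫ θ in (0)..(2 * π), exp (θ * I) ^ (-(n : ℤ)) * ((g (circleMap 0 r θ)).re : ℂ) =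
      π * (p n * r ^ n) := by
  have hgc := continuous_comp_circleMap hsum hr0 hr1
  have hpoint (θ : ℝ) : exp (θ * I) ^ (-(n : ℤ)) * ((g (circleMap 0 r θ)).re : ℂ) =
      (exp (θ * I) ^ (-(n : ℤ)) * g (circleMap 0 r θ)
        + conj (exp (θ * I) ^ (n : ℤ) * g (circleMap 0 r θ))) / 2 := by
    rw [re_eq_add_conj, map_mul, map_zpow₀, ← exp_conj, zpow_neg, ← inv_zpow, ← Complex.exp_neg]
    simp only [map_mul, conj_ofReal, conj_I]
    ring_nf
  have hconj : ∫ θ in (0)..(2 * π), conj (exp (θ * I) ^ (n : ℤ) * g (circleMap 0 r θ)) =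
      conj (∫ θ in (0)..(2 * π), exp (θ * I) ^ (n : ℤ) * g (circleMap 0 r θ)) := by
    simp only [intervalIntegral, map_sub, integral_conj]
  have hint : IntervalIntegrable (fun θ : ℝ => exp (θ * I) ^ (-(n : ℤ)) * g (circleMap 0 r θ))
      volume 0 (2 * π) := ((continuous_exp_mul_I_zpow _).mul hgc).intervalIntegrable _ _
  have hint' : IntervalIntegrable (fun θ : ℝ => conj (exp (θ * I) ^ (n : ℤ) * g (circleMap 0 r θ)))
      volume 0 (2 * π) :=
    (continuous_conj.comp ((continuous_exp_mul_I_zpow _).mul hgc)).intervalIntegrable _ _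
  simp_rw [hpoint]
  rw [intervalIntegral.integral_div, intervalIntegral.integral_add hint hint', hconj,
    integral_zpow_neg_mul_comp_circleMap hsum hr0 hr1,
    integral_zpow_mul_comp_circleMap_of_pos hsum hr0 hr1 hn]
  simp only [map_zero, add_zero]
  ring

end Circle

noncomputable def weightedAngleMeasure (W : ℝ → ℝ) : Measure ℝ :=
  (volume.restrict (Ioc 0 (2 * π))).withDensity fun θ => ENNReal.ofReal (W θ / (2 * π))

section WeightedAngleMeasure

variable {W : ℝ → ℝ}

theorem integral_weightedAngleMeasure (hW : Continuous W) (hW0 : ∀ θ, 0 ≤ W θ) (u : ℝ → ℂ) :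
    ∫ θ, u θ ∂weightedAngleMeasure W = (2 * π)⁻¹ * ∫ θ in (0)..(2 * π), W θ * u θ := by
  rw [weightedAngleMeasure, integral_withDensity_eq_integral_toReal_smul
      (hW.measurable.div_const _).ennreal_ofReal (ae_of_all _ fun _ => ENNReal.ofReal_lt_top),
    intervalIntegral.integral_of_le two_pi_pos.le, ← integral_const_mul]
  congr 1 with θ
  rw [ENNReal.toReal_ofReal (div_nonneg (hW0 θ) two_pi_pos.le), real_smul]
  push_cast
  ring

theorem isProbabilityMeasure_weightedAngleMeasure (hW : Continuous W) (hW0 : ∀ θ, 0 ≤ W θ)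
    (hW1 : ∫ θ in (0)..(2 * π), W θ = 2 * π) : IsProbabilityMeasure (weightedAngleMeasure W) := by
  constructor
  rw [weightedAngleMeasure, withDensity_apply _ MeasurableSet.univ, Measure.restrict_univ,
    ← ofReal_integral_eq_lintegral_ofReal ((hW.div_const _).integrableOn_Ioc)
      (ae_of_all _ fun θ => div_nonneg (hW0 θ) two_pi_pos.le),
    integral_div, ← intervalIntegral.integral_of_le two_pi_pos.le, hW1,
    div_self two_pi_pos.ne', ENNReal.ofReal_one]

end WeightedAngleMeasure

section CaratheodoryClass

variable {g : ℂ → ℂ} {p : ℕ → ℂ}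

theorem norm_sub_mul_add_norm_mul_le_one_of_lt_one (hp0 : p 0 = 1)
    (hsum : ∀ z ∈ ball (0 : ℂ) 1, HasSum (fun n => p n * z ^ n) (g z))
    (hre : ∀ z ∈ ball (0 : ℂ) 1, 0 < (g z).re) {r : ℝ} (hr0 : 0 ≤ r) (hr1 : r < 1)
    {k l : ℕ} (hk : 0 < k) (hl : 0 < l) :
    ‖p (k + l) * r ^ (k + l) / 2 - p k * r ^ k / 2 * (p l * r ^ l / 2)‖
      + ‖p k * r ^ k / 2 * (p l * r ^ l / 2)‖ ≤ 1 := by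
  set W : ℝ → ℝ := fun θ => (g (circleMap 0 r θ)).re
  have hW : Continuous W := continuous_re.comp (continuous_comp_circleMap hsum hr0 hr1)
  have hW0 (θ : ℝ) : 0 ≤ W θ := (hre _ (by simp [abs_of_nonneg hr0, hr1])).le
  have := isProbabilityMeasure_weightedAngleMeasure hW hW0
    (integral_re_comp_circleMap hp0 hsum hr0 hr1)
  have hmoment {n : ℕ} (hn : 0 < n) :
      ∫ θ, exp (θ * I) ^ (-(n : ℤ)) ∂weightedAngleMeasure W = p n * r ^ n / 2 := by
    rw [integral_weightedAngleMeasure hW hW0]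
    simp_rw [mul_comm (W _ : ℂ)]
    rw [integral_zpow_neg_mul_re_comp_circleMap hsum hr0 hr1 hn]
    push_cast
    field_simp
  have h := norm_integral_mul_sub_add_le_one (μ := weightedAngleMeasure W)
    (u := fun θ => exp (θ * I) ^ (-(k : ℤ))) (v := fun θ => exp (θ * I) ^ (-(l : ℤ)))
    (continuous_exp_mul_I_zpow _).aestronglyMeasurable
    (continuous_exp_mul_I_zpow _).aestronglyMeasurable (ae_of_all _ fun θ => by simp)
    (ae_of_all _ fun θ => by simp)
  simp_rw [← zpow_add₀ (Complex.exp_ne_zero _)] at h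
  rwa [show -(k : ℤ) + -l = -((k + l : ℕ) : ℤ) by push_cast; ring, hmoment hk, hmoment hl,
    hmoment (by omega)] at h

theorem le_one_of_forall_mul_pow_le_one {T : ℝ} {N : ℕ} (h : ∀ r ∈ Ioo (0 : ℝ) 1, T * r ^ N ≤ 1) :
    T ≤ 1 := by
  have hcont : Continuous fun r : ℝ => T * r ^ N := by fun_prop
  have htend : Tendsto (fun r : ℝ => T * r ^ N) (𝓝[<] 1) (𝓝 T) :=
    (hcont.tendsto' 1 T (by simp)).mono_left nhdsWithin_le_nhds
  exact le_of_tendsto htend (eventually_of_mem (Ioo_mem_nhdsLT zero_lt_one) h)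

theorem norm_sub_mul_add_norm_mul_le_one (hp0 : p 0 = 1)
    (hsum : ∀ z ∈ ball (0 : ℂ) 1, HasSum (fun n => p n * z ^ n) (g z))
    (hre : ∀ z ∈ ball (0 : ℂ) 1, 0 < (g z).re) {k l : ℕ} (hk : 0 < k) (hl : 0 < l) :
    ‖p (k + l) / 2 - p k / 2 * (p l / 2)‖ + ‖p k / 2 * (p l / 2)‖ ≤ 1 := by
  refine le_one_of_forall_mul_pow_le_one (N := k + l) fun r hr => ?_
  have h := norm_sub_mul_add_norm_mul_le_one_of_lt_one hp0 hsum hre hr.1.le hr.2 hk hl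
  have hscale (c : ℂ) : ‖c * (r ^ (k + l) : ℝ)‖ = ‖c‖ * r ^ (k + l) := by
    rw [norm_mul, norm_real, norm_of_nonneg (pow_nonneg hr.1.le _)]
  rw [show p (k + l) * r ^ (k + l) / 2 - p k * r ^ k / 2 * (p l * r ^ l / 2)
      = (p (k + l) / 2 - p k / 2 * (p l / 2)) * (r ^ (k + l) : ℝ) by push_cast; ring,
    show p k * r ^ k / 2 * (p l * r ^ l / 2) = p k / 2 * (p l / 2) * (r ^ (k + l) : ℝ) by
      push_cast; ring, hscale, hscale] at h
  linarith

end CaratheodoryClass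

theorem convexHull_starlike_ineq_general (g : ℂ → ℂ) (p : ℕ → ℂ)
    (hp0 : p 0 = 1)
    (hsum : ∀ z ∈ ball (0 : ℂ) 1, HasSum (fun n : ℕ => p n * z ^ n) (g z))
    (hre : ∀ z ∈ ball (0 : ℂ) 1, 0 < (g z).re)
    (a : ℕ → ℂ)
    (ha : ∀ n : ℕ, 2 ≤ n → a n = (n : ℂ) * p (n - 1) / 2)
    (m n : ℕ) (hm : 2 ≤ m) (hn : 2 ≤ n) :
    ‖a m * a n / ((m * n : ℕ) : ℂ)
        - a (m + n - 1) / ((m + n - 1 : ℕ) : ℂ)‖ +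
      ‖a m * a n‖ / ((m * n : ℕ) : ℝ) ≤ 1 := by
  have hprod : a m * a n / ((m * n : ℕ) : ℂ) = p (m - 1) / 2 * (p (n - 1) / 2) := by
    have hm0 : (m : ℂ) ≠ 0 := Nat.cast_ne_zero.mpr (by omega)
    have hn0 : (n : ℂ) ≠ 0 := Nat.cast_ne_zero.mpr (by omega)
    rw [ha m hm, ha n hn]
    field_simp
    push_cast
    ring
  have hlast : a (m + n - 1) / ((m + n - 1 : ℕ) : ℂ) = p (m - 1 + (n - 1)) / 2 := by
    have hmn0 : ((m + n - 1 : ℕ) : ℂ) ≠ 0 := Nat.cast_ne_zero.mpr (by omega)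
    rw [ha _ (by omega), show m + n - 1 - 1 = m - 1 + (n - 1) by omega]
    field_simp
  have hnorm : ‖a m * a n‖ / ((m * n : ℕ) : ℝ) = ‖p (m - 1) / 2 * (p (n - 1) / 2)‖ := by
    rw [← hprod, norm_div, Complex.norm_natCast]
  rw [hprod, hlast, hnorm, norm_sub_rev]
  exact norm_sub_mul_add_norm_mul_le_one hp0 hsum hre (by omega) (by omega)

/-- If `f` is in the closed convex hull of the starlike functions, i.e.
`f(z) = (z/2)(1 + g(z) + z g'(z))` for some `g` in the Carathéodory class `P`
with Taylor coefficients `p`, so that `a n = n p_{n-1} / 2` for `n ≥ 2`, then for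
all `m, n ≥ 2`:
`|a_m a_n/(mn) - a_{m+n-1}/(m+n-1)| + |a_m a_n|/(mn) ≤ 1`. -/
theorem convexHull_starlike_ineq (g : ℂ → ℂ) (p : ℕ → ℂ)
    (hp0 : p 0 = 1)
    (hsum : ∀ z ∈ ball (0 : ℂ) 1, HasSum (fun n : ℕ => p n * z ^ n) (g z))
    (hre : ∀ z ∈ ball (0 : ℂ) 1, 0 < (g z).re)
    (f : ℂ → ℂ)
    (hf : ∀ z ∈ ball (0 : ℂ) 1, f z = z / 2 * (1 + g z + z * deriv g z))
    (a : ℕ → ℂ)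
    (ha : ∀ n : ℕ, 2 ≤ n → a n = (n : ℂ) * p (n - 1) / 2)
    (m n : ℕ) (hm : 2 ≤ m) (hn : 2 ≤ n) :
    ‖a m * a n / ((m * n : ℕ) : ℂ)
        - a (m + n - 1) / ((m + n - 1 : ℕ) : ℂ)‖ +
      ‖a m * a n‖ / ((m * n : ℕ) : ℝ) ≤ 1 :=
  convexHull_starlike_ineq_general g p hp0 hsum hre a ha m n hm hn
end

section
/- Suppose f belongs to the closed convex hull of the starlike functions; equivalently, f(z) = (z/2)·(1 + g(z) + z·g'(z)) on 𝔻 for some g ∈ P, so that its Taylor coefficients satisfy a_n = n·p_{n−1}/2 for n ≥ 2. Then for all m, n ≥ 2 and every λ ∈ ℂ: |λ·a_m·a_n − a_{m+n−1}| ≤ (m+n−1)·max{ 1 , |1 − (mn/(m+n−1))·λ| }. -/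
/-!
For `0 ≤ r < 1`, integrating `Re g(r e^{iθ}) · |∑ₐ tₐ e^{i eₐ θ}|² ≥ 0` over the circle term by
term against the Taylor series of `g` and letting `r → 1` gives the Toeplitz-type positivity
`Re ∑_{eₐ ≤ e_b} tₐ t̄_b p_{e_b - eₐ} ≥ 0` for all exponents `e` and vectors `t`. For the
exponents `0, i, i + j` and a vector chosen by completing the square in the middle variable this
is the Livingston-type bound `|p_{i+j} - pᵢ pⱼ / 2| + (|pᵢ|² + |pⱼ|²) / 4 ≤ 2`.

With `i = m - 1`, `j = n - 1` and `2ν = mnλ / (m + n - 1)` one has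
`λ aₘ aₙ - a_{m+n-1} = -(m + n - 1)/2 · (p_{i+j} - ν pᵢ pⱼ)`, and splitting
`p_{i+j} - ν pᵢ pⱼ = (p_{i+j} - pᵢ pⱼ / 2) + (1 - 2ν) pᵢ pⱼ / 2` together with
`|pᵢ| |pⱼ| / 2 ≤ (|pᵢ|² + |pⱼ|²) / 4` finishes the proof.
-/

open Metric Complex Real

open scoped ComplexConjugate

section PowerSeries

variable {g : ℂ → ℂ} {p : ℕ → ℂ}

theorem eball_zero_one_eq_ball : eball (0 : ℂ) 1 = ball 0 1 := by
  simpa using Metric.eball_coe (x := (0 : ℂ)) (ε := 1)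

theorem hasFPowerSeriesOnBall_ofScalars_of_hasSum
    (hsum : ∀ z ∈ ball (0 : ℂ) 1, HasSum (fun n ↦ p n * z ^ n) (g z)) :
    HasFPowerSeriesOnBall g (FormalMultilinearSeries.ofScalars ℂ p) 0 1 where
  r_le := ENNReal.le_of_forall_nnreal_lt fun r hr ↦ by
    have hr : (r : ℂ) ∈ ball (0 : ℂ) 1 := by simpa using hr
    refine FormalMultilinearSeries.le_radius_of_tendsto _ (l := 0) ?_
    simpa [FormalMultilinearSeries.ofScalars_norm] using
      (hsum _ hr).summable.tendsto_atTop_zero.norm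
  r_pos := one_pos
  hasSum {y} hy := by
    rw [eball_zero_one_eq_ball] at hy
    simpa [FormalMultilinearSeries.ofScalars_apply_eq, mul_comm] using hsum y hy

theorem summable_norm_mul_pow_of_hasSum
    (hsum : ∀ z ∈ ball (0 : ℂ) 1, HasSum (fun n ↦ p n * z ^ n) (g z))
    {r : ℝ} (hr0 : 0 ≤ r) (hr1 : r < 1) : Summable fun n ↦ ‖p n‖ * r ^ n := by
  lift r to NNReal using hr0
  have := (FormalMultilinearSeries.ofScalars ℂ p).summable_norm_mul_pow
    ((hasFPowerSeriesOnBall_ofScalars_of_hasSum hsum).r_le.trans_lt' (by exact_mod_cast hr1))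
  simpa [FormalMultilinearSeries.ofScalars_norm] using this

theorem circleMap_zero_mem_ball_one {r : ℝ} (hr0 : 0 ≤ r) (hr1 : r < 1) (θ : ℝ) :
    circleMap 0 r θ ∈ ball (0 : ℂ) 1 := by
  simpa [abs_of_nonneg hr0] using hr1

theorem continuous_comp_circleMap_of_hasSum
    (hsum : ∀ z ∈ ball (0 : ℂ) 1, HasSum (fun n ↦ p n * z ^ n) (g z))
    {r : ℝ} (hr0 : 0 ≤ r) (hr1 : r < 1) : Continuous fun θ ↦ g (circleMap 0 r θ) := by
  have hg := (hasFPowerSeriesOnBall_ofScalars_of_hasSum hsum).continuousOn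
  rw [eball_zero_one_eq_ball] at hg
  exact hg.comp_continuous (continuous_circleMap 0 r) (circleMap_zero_mem_ball_one hr0 hr1)

end PowerSeries

section Fourier

variable {g : ℂ → ℂ} {p : ℕ → ℂ}

theorem integral_exp_int_mul_I (c : ℤ) :
    ∫ θ in (0 : ℝ)..2 * π, exp (c * θ * I) = if c = 0 then (2 * π : ℂ) else 0 := by
  split_ifs with hc
  · simp [hc]
  have hcI : (c : ℂ) * I ≠ 0 := by simp [hc]
  simp_rw [mul_right_comm _ _ I]
  rw [integral_exp_mul_complex hcI, div_eq_zero_iff, sub_eq_zero]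
  left
  push_cast
  rw [show (c : ℂ) * I * (2 * π) = c * (2 * π * I) by ring, exp_int_mul_two_pi_mul_I]
  simp

theorem exp_mul_I_pow_mul_conj_pow (θ : ℝ) (k l : ℕ) :
    exp (θ * I) ^ k * conj (exp (θ * I)) ^ l = exp (((k : ℤ) - l : ℤ) * θ * I) := by
  rw [← exp_conj, ← Complex.exp_nat_mul, ← Complex.exp_nat_mul, ← Complex.exp_add]
  congr 1
  simp only [map_mul, conj_ofReal, conj_I]
  push_cast
  ring

theorem integral_circleMap_mul_pow_mul_conj_pow
    (hsum : ∀ z ∈ ball (0 : ℂ) 1, HasSum (fun n ↦ p n * z ^ n) (g z))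
    {r : ℝ} (hr0 : 0 ≤ r) (hr1 : r < 1) (k l : ℕ) :
    ∫ θ in (0 : ℝ)..2 * π, g (circleMap 0 r θ) * (exp (θ * I) ^ k * conj (exp (θ * I)) ^ l) =
      if k ≤ l then 2 * π * (p (l - k) * r ^ (l - k)) else 0 := by
  set F : ℕ → ℝ → ℂ := fun n θ ↦ p n * r ^ n * exp (((n + k : ℕ) - l : ℤ) * θ * I)
  have hF : ∀ θ, HasSum (fun n ↦ F n θ)
      (g (circleMap 0 r θ) * (exp (θ * I) ^ k * conj (exp (θ * I)) ^ l)) := by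
    intro θ
    rw [show (fun n ↦ F n θ) = fun n ↦ p n * circleMap 0 r θ ^ n *
        (exp (θ * I) ^ k * conj (exp (θ * I)) ^ l) from funext fun n ↦ ?_]
    · exact (hsum _ (circleMap_zero_mem_ball_one hr0 hr1 θ)).mul_right _
    simp only [F]
    rw [exp_mul_I_pow_mul_conj_pow, circleMap_zero, mul_pow, ← Complex.exp_nat_mul,
      show (((n + k : ℕ) - l : ℤ) : ℂ) * θ * I = n * (θ * I) + ((k - l : ℤ) : ℂ) * θ * I by
        push_cast; ring, Complex.exp_add]
    ring
  have hintegral : HasSum (fun n ↦ ∫ θ in (0 : ℝ)..2 * π, F n θ) (∫ θ in (0 : ℝ)..2 * π,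
      g (circleMap 0 r θ) * (exp (θ * I) ^ k * conj (exp (θ * I)) ^ l)) := by
    refine intervalIntegral.hasSum_integral_of_dominated_convergence (fun n _ ↦ ‖p n‖ * r ^ n)
      (fun n ↦ by fun_prop) (fun n ↦ .of_forall fun θ _ ↦ ?_)
      (.of_forall fun _ _ ↦ summable_norm_mul_pow_of_hasSum hsum hr0 hr1)
      intervalIntegrable_const (.of_forall fun θ _ ↦ hF θ)
    simp [F, abs_of_nonneg hr0, Complex.norm_exp]
  have hterm : ∀ n, ∫ θ in (0 : ℝ)..2 * π, F n θ =
      if n + k = l then 2 * π * (p n * r ^ n) else 0 := by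
    intro n
    simp only [F, intervalIntegral.integral_const_mul, integral_exp_int_mul_I, sub_eq_zero,
      Nat.cast_inj]
    split_ifs <;> ring
  refine hintegral.unique ?_
  simp_rw [hterm]
  split_ifs with hkl
  · simpa [Nat.sub_add_cancel hkl] using hasSum_single
      (f := fun n ↦ if n + k = l then 2 * π * (p n * r ^ n) else (0 : ℂ)) (l - k)
      fun n hn ↦ if_neg (by omega)
  · simp only [show ∀ n, n + k ≠ l from fun n ↦ by omega, if_false]
    exact hasSum_zero

end Fourier

section Toeplitz

variable {ι : Type*} [Fintype ι] {g : ℂ → ℂ} {p : ℕ → ℂ}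

/-- When `c 0 = 1`, the real part is half the Hermitian form `∑ t_a t̄_b C_{e_b - e_a}` of the
Toeplitz sequence `C_0 = 2`, `C_k = c k`, `C_{-k} = conj (c k)`. -/
def toeplitzForm (c : ℕ → ℂ) (e : ι → ℕ) (t : ι → ℂ) : ℂ :=
  ∑ a, ∑ b, if e a ≤ e b then t a * conj (t b) * c (e b - e a) else 0

theorem integral_circleMap_mul_norm_sq_eq_toeplitzForm
    (hsum : ∀ z ∈ ball (0 : ℂ) 1, HasSum (fun n ↦ p n * z ^ n) (g z))
    {r : ℝ} (hr0 : 0 ≤ r) (hr1 : r < 1) (e : ι → ℕ) (t : ι → ℂ) :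
    ∫ θ in (0 : ℝ)..2 * π, g (circleMap 0 r θ) * ‖∑ a, t a * exp (θ * I) ^ e a‖ ^ 2 =
      2 * π * toeplitzForm (fun n ↦ p n * r ^ n) e t := by
  have hexpand : ∀ θ : ℝ, g (circleMap 0 r θ) * ‖∑ a, t a * exp (θ * I) ^ e a‖ ^ 2 =
      ∑ a, ∑ b, t a * conj (t b) *
        (g (circleMap 0 r θ) * (exp (θ * I) ^ e a * conj (exp (θ * I)) ^ e b)) := by
    intro θ
    simp_rw [← mul_conj', map_sum, Finset.sum_mul_sum, Finset.mul_sum]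
    refine Finset.sum_congr rfl fun a _ ↦ Finset.sum_congr rfl fun b _ ↦ ?_
    simp only [map_mul, map_pow]
    ring
  have hint : ∀ a b, IntervalIntegrable (fun θ : ℝ ↦ t a * conj (t b) *
      (g (circleMap 0 r θ) * (exp (θ * I) ^ e a * conj (exp (θ * I)) ^ e b)))
      MeasureTheory.volume 0 (2 * π) := fun a b ↦
    (((continuous_comp_circleMap_of_hasSum hsum hr0 hr1).mul (by fun_prop)).const_mul
      _).intervalIntegrable _ _
  simp_rw [hexpand]
  rw [intervalIntegral.integral_finsetSum fun a _ ↦ by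
    simpa only [Finset.sum_fn] using IntervalIntegrable.sum Finset.univ fun b _ ↦ hint a b]
  simp_rw [intervalIntegral.integral_finsetSum fun b _ ↦ hint _ b,
    intervalIntegral.integral_const_mul, integral_circleMap_mul_pow_mul_conj_pow hsum hr0 hr1,
    toeplitzForm, Finset.mul_sum]
  refine Finset.sum_congr rfl fun a _ ↦ Finset.sum_congr rfl fun b _ ↦ ?_
  split_ifs <;> ring

theorem toeplitzForm_re_nonneg_of_lt_one
    (hsum : ∀ z ∈ ball (0 : ℂ) 1, HasSum (fun n ↦ p n * z ^ n) (g z))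
    (hre : ∀ z ∈ ball (0 : ℂ) 1, 0 ≤ (g z).re)
    {r : ℝ} (hr0 : 0 ≤ r) (hr1 : r < 1) (e : ι → ℕ) (t : ι → ℂ) :
    0 ≤ (toeplitzForm (fun n ↦ p n * r ^ n) e t).re := by
  have hcont : Continuous fun θ : ℝ ↦
      g (circleMap 0 r θ) * ‖∑ a, t a * exp (θ * I) ^ e a‖ ^ 2 :=
    (continuous_comp_circleMap_of_hasSum hsum hr0 hr1).mul (by fun_prop)
  refine (mul_nonneg_iff_of_pos_left (by positivity : (0 : ℝ) < 2 * π)).1 ?_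
  calc 0 ≤ ∫ θ in (0 : ℝ)..2 * π, (g (circleMap 0 r θ)).re * ‖∑ a, t a * exp (θ * I) ^ e a‖ ^ 2 :=
        intervalIntegral.integral_nonneg (by positivity) fun θ _ ↦
          mul_nonneg (hre _ (circleMap_zero_mem_ball_one hr0 hr1 θ)) (by positivity)
    _ = (∫ θ in (0 : ℝ)..2 * π, g (circleMap 0 r θ) * ‖∑ a, t a * exp (θ * I) ^ e a‖ ^ 2).re := by
        simpa [← ofReal_pow, re_mul_ofReal] using
          intervalIntegral.intervalIntegral_re
            (hcont.intervalIntegrable (μ := MeasureTheory.volume) 0 (2 * π))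
    _ = 2 * π * (toeplitzForm (fun n ↦ p n * r ^ n) e t).re := by
        rw [integral_circleMap_mul_norm_sq_eq_toeplitzForm hsum hr0 hr1]
        simp

theorem toeplitzForm_re_nonneg
    (hsum : ∀ z ∈ ball (0 : ℂ) 1, HasSum (fun n ↦ p n * z ^ n) (g z))
    (hre : ∀ z ∈ ball (0 : ℂ) 1, 0 ≤ (g z).re) (e : ι → ℕ) (t : ι → ℂ) :
    0 ≤ (toeplitzForm p e t).re := by
  have hcont : Continuous fun r : ℝ ↦ (toeplitzForm (fun n ↦ p n * r ^ n) e t).re := by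
    refine continuous_re.comp
      (continuous_finsetSum _ fun a _ ↦ continuous_finsetSum _ fun b _ ↦ ?_)
    split_ifs <;> fun_prop
  have hIcc : Set.Icc (0 : ℝ) 1 ⊆ {r | 0 ≤ (toeplitzForm (fun n ↦ p n * r ^ n) e t).re} := by
    rw [← closure_Ioo zero_ne_one, (isClosed_le continuous_const hcont).closure_subset_iff]
    exact fun r hr ↦ toeplitzForm_re_nonneg_of_lt_one hsum hre hr.1.le hr.2 e t
  simpa using hIcc ⟨zero_le_one, le_rfl⟩

end Toeplitz

theorem norm_sub_half_mul_add_le_two {P₁ P₂ P₃ : ℂ}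
    (H : ∀ t₀ t₁ t₂ : ℂ, 0 ≤ (t₀ * conj t₀ + t₁ * conj t₁ + t₂ * conj t₂ +
      t₀ * conj t₁ * P₁ + t₀ * conj t₂ * P₂ + t₁ * conj t₂ * P₃).re) :
    ‖P₂ - P₁ * P₃ / 2‖ + (‖P₁‖ ^ 2 + ‖P₃‖ ^ 2) / 4 ≤ 2 := by
  set N := ‖P₂ - P₁ * P₃ / 2‖
  set v := exp (arg (P₂ - P₁ * P₃ / 2) * I)
  have hP₂ : P₂ = N * v + P₁ * P₃ / 2 := by
    rw [norm_mul_exp_arg_mul_I]; ring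
  have hv : normSq v = 1 := by rw [normSq_eq_norm_sq, norm_exp_ofReal_mul_I, one_pow]
  -- `t₁` minimises the form for `t₀ = 1, t₂ = -v`, leaving `2 - (‖P₁‖² + ‖P₃‖²) / 4 - N`.
  have h := H 1 (-(P₁ - v * conj P₃) / 2) (-v)
  rw [hP₂] at h
  simp only [map_mul, map_neg, map_sub, map_div₀, conj_conj, map_one, map_ofNat,
    mul_re, mul_im, add_re, add_im, sub_re, sub_im, neg_re, neg_im, div_re, div_im, conj_re,
    conj_im, ofReal_re, ofReal_im, one_re, one_im, normSq_ofNat, re_ofNat, im_ofNat] at h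
  simp only [← normSq_eq_norm_sq, normSq_apply] at hv ⊢
  linear_combination h + (1 - N - (P₃.re * P₃.re + P₃.im * P₃.im) / 4) * hv

theorem norm_coeff_add_sub_half_mul_add_le_two {g : ℂ → ℂ} {p : ℕ → ℂ}
    (hsum : ∀ z ∈ ball (0 : ℂ) 1, HasSum (fun n ↦ p n * z ^ n) (g z))
    (hre : ∀ z ∈ ball (0 : ℂ) 1, 0 ≤ (g z).re) (hp0 : p 0 = 1) {i j : ℕ} (hi : i ≠ 0)
    (hj : j ≠ 0) :
    ‖p (i + j) - p i * p j / 2‖ + (‖p i‖ ^ 2 + ‖p j‖ ^ 2) / 4 ≤ 2 := by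
  refine norm_sub_half_mul_add_le_two fun t₀ t₁ t₂ ↦ ?_
  have := toeplitzForm_re_nonneg hsum hre ![0, i, i + j] ![t₀, t₁, t₂]
  simp only [toeplitzForm, Fin.sum_univ_three] at this
  simp [hp0, hi, hj] at this ⊢
  linarith

theorem norm_sub_mul_mul_le_two_mul_max {P₁ P₂ P₃ : ℂ}
    (h : ‖P₂ - P₁ * P₃ / 2‖ + (‖P₁‖ ^ 2 + ‖P₃‖ ^ 2) / 4 ≤ 2) (ν : ℂ) :
    ‖P₂ - ν * (P₁ * P₃)‖ ≤ 2 * max 1 ‖1 - 2 * ν‖ := by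
  have hM := le_max_left 1 ‖1 - 2 * ν‖
  have hAMGM : ‖P₁‖ * ‖P₃‖ / 2 ≤ (‖P₁‖ ^ 2 + ‖P₃‖ ^ 2) / 4 := by
    nlinarith [sq_nonneg (‖P₁‖ - ‖P₃‖)]
  calc ‖P₂ - ν * (P₁ * P₃)‖ = ‖(P₂ - P₁ * P₃ / 2) + (1 - 2 * ν) * (P₁ * P₃ / 2)‖ := by ring_nf
    _ ≤ ‖P₂ - P₁ * P₃ / 2‖ + ‖1 - 2 * ν‖ * (‖P₁‖ * ‖P₃‖ / 2) := by
      grw [norm_add_le, norm_mul, norm_div, norm_mul, Complex.norm_two]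
    _ ≤ max 1 ‖1 - 2 * ν‖ * (‖P₂ - P₁ * P₃ / 2‖ + ‖P₁‖ * ‖P₃‖ / 2) := by
      nlinarith [le_max_right 1 ‖1 - 2 * ν‖, norm_nonneg (P₂ - P₁ * P₃ / 2),
        mul_nonneg (norm_nonneg P₁) (norm_nonneg P₃)]
    _ ≤ 2 * max 1 ‖1 - 2 * ν‖ := by nlinarith

theorem convexHull_starlike_zalcman_general (g : ℂ → ℂ) (p : ℕ → ℂ)
    (hp0 : p 0 = 1)
    (hsum : ∀ z ∈ ball (0 : ℂ) 1, HasSum (fun n : ℕ => p n * z ^ n) (g z))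
    (hre : ∀ z ∈ ball (0 : ℂ) 1, 0 < (g z).re)
    (a : ℕ → ℂ)
    (ha : ∀ n : ℕ, 2 ≤ n → a n = (n : ℂ) * p (n - 1) / 2)
    (m n : ℕ) (hm : 2 ≤ m) (hn : 2 ≤ n) :
    ∀ lam : ℂ, ‖lam * (a m * a n) - a (m + n - 1)‖ ≤
      ((m + n - 1 : ℕ) : ℝ) *
        max 1 ‖1 - ((m * n : ℕ) : ℂ) / ((m + n - 1 : ℕ) : ℂ) * lam‖ := by
  intro lam
  set N := m + n - 1
  have hN : (N : ℂ) ≠ 0 := by norm_cast; omega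
  set ν := (m * n : ℕ) / N * lam / 2
  have hbound := norm_sub_mul_mul_le_two_mul_max (norm_coeff_add_sub_half_mul_add_le_two hsum
    (fun z hz ↦ (hre z hz).le) hp0 (i := m - 1) (j := n - 1) (by omega) (by omega)) ν
  have hcoeff : lam * (a m * a n) - a N =
      -(N / 2 : ℂ) * (p (m - 1 + (n - 1)) - ν * (p (m - 1) * p (n - 1))) := by
    rw [ha m hm, ha n hn, ha N (by omega), show N - 1 = m - 1 + (n - 1) by omega]
    simp only [ν]
    field_simp
    push_cast
    ring
  rw [hcoeff, norm_mul, norm_neg, norm_div, Complex.norm_natCast, Complex.norm_two,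
    show (1 : ℂ) - (m * n : ℕ) / N * lam = 1 - 2 * ν by ring]
  nlinarith [hbound, (N.cast_nonneg : (0 : ℝ) ≤ N)]

/-- If `f` is in the closed convex hull of the starlike functions, i.e.
`f(z) = (z/2)(1 + g(z) + z g'(z))` for some `g` in the Carathéodory class `P`
with Taylor coefficients `p`, so that `a n = n p_{n-1} / 2` for `n ≥ 2`, then for
all `m, n ≥ 2` and every `λ : ℂ`:
`|λ a_m a_n - a_{m+n-1}| ≤ (m+n-1) max 1 |1 - (mn/(m+n-1)) λ|`. -/
theorem convexHull_starlike_zalcman (g : ℂ → ℂ) (p : ℕ → ℂ)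
    (hp0 : p 0 = 1)
    (hsum : ∀ z ∈ ball (0 : ℂ) 1, HasSum (fun n : ℕ => p n * z ^ n) (g z))
    (hre : ∀ z ∈ ball (0 : ℂ) 1, 0 < (g z).re)
    (f : ℂ → ℂ)
    (hf : ∀ z ∈ ball (0 : ℂ) 1, f z = z / 2 * (1 + g z + z * deriv g z))
    (a : ℕ → ℂ)
    (ha : ∀ n : ℕ, 2 ≤ n → a n = (n : ℂ) * p (n - 1) / 2)
    (m n : ℕ) (hm : 2 ≤ m) (hn : 2 ≤ n) :
    ∀ lam : ℂ, ‖lam * (a m * a n) - a (m + n - 1)‖ ≤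
      ((m + n - 1 : ℕ) : ℝ) *
        max 1 ‖1 - ((m * n : ℕ) : ℂ) / ((m + n - 1 : ℕ) : ℂ) * lam‖ :=
  convexHull_starlike_zalcman_general g p hp0 hsum hre a ha m n hm hn
end
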